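/- (Solution of the homogeneous equation, case k ≠ 2.) Let k be an integer with 0 ≤ k ≤ n and k ≠ 2. A differentiable function f : U → ℝ satisfies f'(u)·g(u) + (k−1)·f(u)·g'(u) + (2−k)·f(u) = 0 for all u ∈ U if and only if there exists a constant b ∈ ℝ such that f(u) = b·((n−1)/(n−2))^{k−1}·(F'(u))^{k−1}·|F(u)|^{(k−n)/(n−2)} for all u ∈ U. -/

import Mathlib

/-!
Write `φ = ((n-1)/(n-2))^(k-1) · F'^(k-1) · |F|^((k-n)/(n-2))`, which never vanishes on `U`.
A direct computation with `g = (n-2)F / ((n-1)F')` shows that the left-hand side of the equation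
equals `g · (f' - (φ'/φ) f)`. As `g ≠ 0`, the equation says `(f/φ)' = 0`, i.e. `f/φ` is constant on
the interval `U`.
-/

/-- The function `g = ((n−2)F)/((n−1)F')`. -/
noncomputable def gFun (n : ℕ) (F : ℝ → ℝ) (u : ℝ) : ℝ :=
  (((n : ℝ) - 2) * F u) / (((n : ℝ) - 1) * deriv F u)

theorem HasDerivAt.abs_rpow_const {F : ℝ → ℝ} {d u : ℝ} (hF : HasDerivAt F d u)
    (hne : F u ≠ 0) (r : ℝ) :
    HasDerivAt (fun x ↦ |F x| ^ r) (r * d / F u * |F u| ^ r) u := by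
  refine (((hasDerivAt_abs hne).comp u hF).rpow_const (p := r)
    (.inl (abs_ne_zero.2 hne))).congr_deriv ?_
  simp only [Function.comp_apply]
  rw [Real.rpow_sub_one (abs_ne_zero.2 hne)]
  rcases hne.lt_or_gt with hneg | hpos
  · simp only [hneg, sign_neg, SignType.coe_neg_one, abs_of_neg]
    field_simp
  · simp only [hpos, sign_pos, SignType.coe_one, abs_of_pos]
    field_simp

theorem HasDerivAt.zpow_mul_abs_rpow {G F : ℝ → ℝ} {e d u : ℝ} (hG : HasDerivAt G e u)
    (hF : HasDerivAt F d u) (hG0 : G u ≠ 0) (hF0 : F u ≠ 0) (m : ℤ) (r : ℝ) :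
    HasDerivAt (fun x ↦ G x ^ m * |F x| ^ r)
      ((m * e / G u + r * d / F u) * (G u ^ m * |F u| ^ r)) u := by
  have hGm : HasDerivAt (fun x ↦ G x ^ m) (m * e / G u * G u ^ m) u := by
    refine ((hasDerivAt_zpow m (G u) (.inl hG0)).comp u hG).congr_deriv ?_
    rw [zpow_sub_one₀ hG0]
    field_simp
  refine (hGm.mul (hF.abs_rpow_const hF0 r)).congr_deriv ?_
  ring

theorem IsOpen.exists_eq_const_mul_iff_deriv_eq_mul {U : Set ℝ} (hU : IsOpen U)
    (hUc : IsPreconnected U) {f φ ψ : ℝ → ℝ} (hf : ∀ u ∈ U, DifferentiableAt ℝ f u)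
    (hφ : ∀ u ∈ U, HasDerivAt φ (ψ u * φ u) u) (hφ0 : ∀ u ∈ U, φ u ≠ 0) :
    (∀ u ∈ U, deriv f u = ψ u * f u) ↔ ∃ b, ∀ u ∈ U, f u = b * φ u := by
  constructor
  · intro hf'
    have hquot : ∀ u ∈ U, HasDerivAt (fun x ↦ f x / φ x) 0 u := fun u hu ↦ by
      refine ((hf u hu).hasDerivAt.div (hφ u hu) (hφ0 u hu)).congr_deriv ?_
      rw [hf' u hu]
      ring
    obtain ⟨b, hb⟩ := hU.exists_is_const_of_deriv_eq_zero hUc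
      (fun u hu ↦ (hquot u hu).differentiableAt.differentiableWithinAt)
      (fun u hu ↦ (hquot u hu).deriv)
    exact ⟨b, fun u hu ↦ by rw [← hb u hu, div_mul_cancel₀ _ (hφ0 u hu)]⟩
  · rintro ⟨b, hb⟩ u hu
    have hfφ : f =ᶠ[nhds u] fun x ↦ b * φ x :=
      Filter.eventually_of_mem (hU.mem_nhds hu) hb
    rw [hfφ.deriv_eq, ((hφ u hu).const_mul b).deriv, hb u hu]
    ring

section

variable {n : ℕ} {F : ℝ → ℝ} {u : ℝ}

theorem hasDerivAt_gFun (hF : DifferentiableAt ℝ F u) (hF' : DifferentiableAt ℝ (deriv F) u)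
    (hF'0 : deriv F u ≠ 0) (hn1 : (n : ℝ) - 1 ≠ 0) :
    HasDerivAt (gFun n F)
      (((n : ℝ) - 2) * (deriv F u ^ 2 - F u * deriv (deriv F) u) / (((n : ℝ) - 1) * deriv F u ^ 2))
      u := by
  refine ((hF.hasDerivAt.const_mul _).div (hF'.hasDerivAt.const_mul _)
    (mul_ne_zero hn1 hF'0)).congr_deriv ?_
  field_simp

noncomputable def homogeneousSolution (n k : ℕ) (F : ℝ → ℝ) (u : ℝ) : ℝ :=
  (((n : ℝ) - 1) / ((n : ℝ) - 2)) ^ ((k : ℤ) - 1)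
    * (deriv F u ^ ((k : ℤ) - 1) * |F u| ^ (((k : ℝ) - n) / ((n : ℝ) - 2)))

noncomputable def homogeneousLogDeriv (n k : ℕ) (F : ℝ → ℝ) (u : ℝ) : ℝ :=
  ((k : ℝ) - 1) * deriv (deriv F) u / deriv F u
    + ((k : ℝ) - n) / ((n : ℝ) - 2) * deriv F u / F u

theorem homogeneousSolution_ne_zero (k : ℕ) (hn1 : (n : ℝ) - 1 ≠ 0) (hn2 : (n : ℝ) - 2 ≠ 0)
    (hF0 : F u ≠ 0) (hF'0 : deriv F u ≠ 0) : homogeneousSolution n k F u ≠ 0 :=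
  mul_ne_zero (zpow_ne_zero _ (div_ne_zero hn1 hn2))
    (mul_ne_zero (zpow_ne_zero _ hF'0) (Real.rpow_pos_of_pos (abs_pos.2 hF0) _).ne')

theorem hasDerivAt_homogeneousSolution (k : ℕ) (hF : DifferentiableAt ℝ F u)
    (hF' : DifferentiableAt ℝ (deriv F) u) (hF0 : F u ≠ 0) (hF'0 : deriv F u ≠ 0) :
    HasDerivAt (homogeneousSolution n k F)
      (homogeneousLogDeriv n k F u * homogeneousSolution n k F u) u := by
  refine ((hF'.hasDerivAt.zpow_mul_abs_rpow hF.hasDerivAt hF'0 hF0 _ _).const_mul _).congr_deriv ?_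
  simp only [homogeneousLogDeriv, homogeneousSolution]
  push_cast
  ring

theorem homogeneousEquation_eq_gFun_mul (k : ℕ) (hn1 : (n : ℝ) - 1 ≠ 0) (hn2 : (n : ℝ) - 2 ≠ 0)
    (hF : DifferentiableAt ℝ F u) (hF' : DifferentiableAt ℝ (deriv F) u)
    (hF0 : F u ≠ 0) (hF'0 : deriv F u ≠ 0) (y y' : ℝ) :
    y' * gFun n F u + ((k : ℝ) - 1) * y * deriv (gFun n F) u + (2 - (k : ℝ)) * y
      = gFun n F u * (y' - homogeneousLogDeriv n k F u * y) := by
  rw [(hasDerivAt_gFun hF hF' hF'0 hn1).deriv, gFun, homogeneousLogDeriv]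
  field_simp
  ring

end

theorem stmt13_general (n : ℕ) (hn : 4 ≤ n)
    (U : Set ℝ) (hU : IsOpen U) (hUc : U.OrdConnected)
    (F : ℝ → ℝ)
    (hF₁ : ∀ u ∈ U, DifferentiableAt ℝ F u)
    (hF₂ : ∀ u ∈ U, DifferentiableAt ℝ (deriv F) u)
    (hFne : ∀ u ∈ U, F u ≠ 0)
    (hF'pos : ∀ u ∈ U, 0 < deriv F u)
    (k : ℕ)
    (f : ℝ → ℝ) (hf : ∀ u ∈ U, DifferentiableAt ℝ f u) :
    (∀ u ∈ U,
      deriv f u * gFun n F u + ((k : ℝ) - 1) * f u * deriv (gFun n F) u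
        + (2 - (k : ℝ)) * f u = 0) ↔
    ∃ b : ℝ, ∀ u ∈ U,
      f u = b * (((n : ℝ) - 1) / ((n : ℝ) - 2)) ^ ((k : ℤ) - 1)
        * (deriv F u) ^ ((k : ℤ) - 1)
        * |F u| ^ ((((k : ℝ) - (n : ℝ)) / ((n : ℝ) - 2))) := by
  have hn4 : (4 : ℝ) ≤ n := by exact_mod_cast hn
  have hn1 : (n : ℝ) - 1 ≠ 0 := by linarith
  have hn2 : (n : ℝ) - 2 ≠ 0 := by linarith
  calc _ ↔ ∀ u ∈ U, deriv f u = homogeneousLogDeriv n k F u * f u := by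
        refine forall₂_congr fun u hu ↦ ?_
        have hF'0 := (hF'pos u hu).ne'
        have hg0 : gFun n F u ≠ 0 :=
          div_ne_zero (mul_ne_zero hn2 (hFne u hu)) (mul_ne_zero hn1 hF'0)
        rw [homogeneousEquation_eq_gFun_mul k hn1 hn2 (hF₁ u hu) (hF₂ u hu) (hFne u hu) hF'0,
          mul_eq_zero_iff_left hg0, sub_eq_zero]
    _ ↔ ∃ b, ∀ u ∈ U, f u = b * homogeneousSolution n k F u :=
        hU.exists_eq_const_mul_iff_deriv_eq_mul hUc.isPreconnected hf
          (fun u hu ↦ hasDerivAt_homogeneousSolution k (hF₁ u hu) (hF₂ u hu) (hFne u hu)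
            (hF'pos u hu).ne')
          (fun u hu ↦ homogeneousSolution_ne_zero k hn1 hn2 (hFne u hu) (hF'pos u hu).ne')
    _ ↔ _ := by simp only [homogeneousSolution, mul_assoc]

theorem stmt13 (n : ℕ) (hn : 4 ≤ n)
    (U : Set ℝ) (hU : IsOpen U) (hUc : U.OrdConnected)
    (F : ℝ → ℝ)
    (hF₁ : ∀ u ∈ U, DifferentiableAt ℝ F u)
    (hF₂ : ∀ u ∈ U, DifferentiableAt ℝ (deriv F) u)
    (hFne : ∀ u ∈ U, F u ≠ 0)
    (hF'pos : ∀ u ∈ U, 0 < deriv F u)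
    (k : ℕ) (hk : k ≤ n) (hk2 : k ≠ 2)
    (f : ℝ → ℝ) (hf : ∀ u ∈ U, DifferentiableAt ℝ f u) :
    (∀ u ∈ U,
      deriv f u * gFun n F u + ((k : ℝ) - 1) * f u * deriv (gFun n F) u
        + (2 - (k : ℝ)) * f u = 0) ↔
    ∃ b : ℝ, ∀ u ∈ U,
      f u = b * (((n : ℝ) - 1) / ((n : ℝ) - 2)) ^ ((k : ℤ) - 1)
        * (deriv F u) ^ ((k : ℤ) - 1)
        * |F u| ^ ((((k : ℝ) - (n : ℝ)) / ((n : ℝ) - 2))) :=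
  stmt13_general n hn U hU hUc F hF₁ hF₂ hFne hF'pos k f hf
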